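/- arXiv:2601.19389 — 9 statements merged into one kernel-verified Lean document; each statement's English description precedes it below -/
import Mathlib

section
/- If X and Y are discrete random variables on ℕ such that the likelihood ratio f_X(x)/f_Y(x) is nonincreasing on the union of the supports (with a/0 = +∞ for a > 0), then S_X(x)/S_Y(x) is nonincreasing wherever S_Y(x) > 0; i.e., the likelihood ratio order implies the hazard rate order. -/
/-- The likelihood ratio order implies the hazard rate order: if `f x / g x` is
nonincreasing on the union of the supports (with the convention `a/0 = +∞` for `a > 0`,
encoded by cross-multiplication `f y * g x ≤ f x * g y`), then `SX x / SY x` is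
nonincreasing wherever `SY x > 0`. -/
theorem lr_implies_hr
    (f g : ℕ → ℝ) (hf0 : ∀ x, 0 ≤ f x) (hg0 : ∀ x, 0 ≤ g x)
    (hfsum : Summable f) (hgsum : Summable g)
    (hf1 : ∑' x : ℕ, f x = 1) (hg1 : ∑' x : ℕ, g x = 1)
    (SX SY : ℕ → ℝ)
    (hSX : ∀ x, SX x = ∑' i : ℕ, f (x + i))
    (hSY : ∀ x, SY x = ∑' i : ℕ, g (x + i))
    (hlr : ∀ x y : ℕ, x ≤ y → (f x ≠ 0 ∨ g x ≠ 0) → (f y ≠ 0 ∨ g y ≠ 0) →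
      f y * g x ≤ f x * g y) :
    ∀ x y : ℕ, x ≤ y → 0 < SY y → SX y / SY y ≤ SX x / SY x := by
  -- The cross-multiplied likelihood ratio inequality holds unconditionally.
  have key : ∀ a b : ℕ, a ≤ b → f b * g a ≤ f a * g b := by
    intro a b hab
    by_cases ha : f a = 0 ∧ g a = 0
    · simp [ha.1, ha.2]
    · by_cases hb : f b = 0 ∧ g b = 0
      · simp [hb.1, hb.2]
      · exact hlr a b hab (not_and_or.mp ha |>.imp id id) (not_and_or.mp hb |>.imp id id)
  -- Summability of the shifted tails
  have hshift : ∀ k : ℕ, Summable (fun i : ℕ => f (k + i)) := by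
    intro k
    have := (summable_nat_add_iff k).mpr hfsum
    simpa [add_comm] using this
  have hshiftg : ∀ k : ℕ, Summable (fun i : ℕ => g (k + i)) := by
    intro k
    have := (summable_nat_add_iff k).mpr hgsum
    simpa [add_comm] using this
  intro x y hxy hSYy
  set n := y - x with hn
  have hxn : x + n = y := by omega
  -- Decompose SX x and SY x
  have hdecf : SX x = (∑ i ∈ Finset.range n, f (x + i)) + SX y := by
    have h := Summable.sum_add_tsum_nat_add n (hshift x)
    rw [hSX x, hSX y, ← h]
    congr 1
    apply tsum_congr
    intro i
    congr 1
    omega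
  have hdecg : SY x = (∑ i ∈ Finset.range n, g (x + i)) + SY y := by
    have h := Summable.sum_add_tsum_nat_add n (hshiftg x)
    rw [hSY x, hSY y, ← h]
    congr 1
    apply tsum_congr
    intro i
    congr 1
    omega
  have hA : 0 ≤ ∑ i ∈ Finset.range n, f (x + i) :=
    Finset.sum_nonneg fun i _ => hf0 _
  have hB : 0 ≤ ∑ i ∈ Finset.range n, g (x + i) :=
    Finset.sum_nonneg fun i _ => hg0 _
  have hSYx : 0 < SY x := by rw [hdecg]; linarith
  rw [div_le_div_iff₀ hSYy hSYx, hdecf, hdecg]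
  have hSXy : 0 ≤ SX y := by
    rw [hSX y]; exact tsum_nonneg fun i => hf0 _
  -- Core inequality: SX y * B ≤ A * SY y
  have core : SX y * (∑ i ∈ Finset.range n, g (x + i)) ≤
      (∑ i ∈ Finset.range n, f (x + i)) * SY y := by
    rw [Finset.mul_sum, Finset.sum_mul]
    apply Finset.sum_le_sum
    intro i hi
    have hi' : x + i ≤ y := by
      have := Finset.mem_range.mp hi
      omega
    have h1 : SX y * g (x + i) = ∑' j : ℕ, f (y + j) * g (x + i) := by
      rw [hSX y, tsum_mul_right]
    have h2 : f (x + i) * SY y = ∑' j : ℕ, f (x + i) * g (y + j) := by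
      rw [hSY y, tsum_mul_left]
    rw [h1, h2]
    apply Summable.tsum_le_tsum
    · intro j
      exact key (x + i) (y + j) (by omega)
    · exact (hshift y).mul_right _
    · exact (hshiftg y).mul_left _
  nlinarith [mul_nonneg hSXy hB, mul_nonneg hA (le_of_lt hSYy)]
end

section
/- Let X and Y be discrete random variables on ℕ with Supp(X) ⊆ Supp(Y), and suppose the likelihood ratio l(x) = f_X(x)/f_Y(x) is strictly unimodal on Supp(Y): there exists x₀ with 0 < x₀ such that l is increasing (not constant) on {0,...,x₀} and decreasing (not constant) on {x₀,...}. If l(0) ≥ 1, then S_X(x)/S_Y(x) is nonincreasing on {x : S_Y(x) > 0}, i.e., X ≤_hr Y. -/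
private lemma shift_summable (f : ℕ → ℝ) (hf : Summable f) (x : ℕ) :
    Summable (fun i => f (x + i)) := by
  simpa [add_comm] using (summable_nat_add_iff x).2 hf

private lemma shift_tsum (f : ℕ → ℝ) (hf : Summable f) (x : ℕ) :
    ∑' i, f (x + i) = f x + ∑' i, f (x + 1 + i) := by
  rw [Summable.tsum_eq_zero_add (shift_summable f hf x)]
  congr 1
  exact tsum_congr fun i => by rw [show x + (i+1) = x + 1 + i by omega]

private lemma tail_eq (f : ℕ → ℝ) (hf : Summable f) (hf1 : ∑' i, f i = 1) (x : ℕ) :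
    ∑' i, f (x + i) = 1 - ∑ i ∈ Finset.range x, f i := by
  have := Summable.sum_add_tsum_nat_add (f := f) x hf
  rw [hf1] at this
  have h2 : ∑' i, f (x + i) = ∑' i, f (i + x) := tsum_congr fun i => by rw [add_comm]
  linarith

/-- Theorem 1(i): if `Supp(X) ⊆ Supp(Y)` and the likelihood ratio `l x = f x / g x`
is strictly unimodal on `Supp(Y)` (increasing, not constant, up to some `x₀ > 0` and
decreasing, not constant, afterwards) and `l 0 ≥ 1`, then `SX x / SY x` is
nonincreasing on `{x : SY x > 0}`, i.e. `X ≤_hr Y`. -/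
theorem unimodal_lr_ge_one_implies_hr
    (f g : ℕ → ℝ) (hf0 : ∀ x, 0 ≤ f x) (hg0 : ∀ x, 0 ≤ g x)
    (hfsum : Summable f) (hgsum : Summable g)
    (hf1 : ∑' x : ℕ, f x = 1) (hg1 : ∑' x : ℕ, g x = 1)
    (hsupp : ∀ x, f x ≠ 0 → g x ≠ 0)
    (SX SY : ℕ → ℝ)
    (hSX : ∀ x, SX x = ∑' i : ℕ, f (x + i))
    (hSY : ∀ x, SY x = ∑' i : ℕ, g (x + i))
    (hunim : ∃ x₀ : ℕ, 0 < x₀ ∧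
      (∀ x y : ℕ, x ≤ y → y ≤ x₀ → g x ≠ 0 → g y ≠ 0 → f x / g x ≤ f y / g y) ∧
      (∃ x y : ℕ, x ≤ y ∧ y ≤ x₀ ∧ g x ≠ 0 ∧ g y ≠ 0 ∧ f x / g x < f y / g y) ∧
      (∀ x y : ℕ, x₀ ≤ x → x ≤ y → g x ≠ 0 → g y ≠ 0 → f y / g y ≤ f x / g x) ∧
      (∃ x y : ℕ, x₀ ≤ x ∧ x ≤ y ∧ g x ≠ 0 ∧ g y ≠ 0 ∧ f y / g y < f x / g x))
    (hl0 : 1 ≤ f 0 / g 0) :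
    ∀ x y : ℕ, x ≤ y → 0 < SY y → SX y / SY y ≤ SX x / SY x := by
  obtain ⟨x₀, -, hinc, -, hdec, -⟩ := hunim
  have hgz : ∀ i, g i = 0 → f i = 0 := fun i h => by
    by_contra hf; exact hsupp i hf h
  have hg00 : g 0 ≠ 0 := by
    intro h
    rw [hgz 0 h, h] at hl0; norm_num at hl0
  -- survival recursions and positivity
  have hSXrec : ∀ x, SX x = f x + SX (x + 1) := fun x => by
    rw [hSX, hSX]; exact shift_tsum f hfsum x
  have hSYrec : ∀ x, SY x = g x + SY (x + 1) := fun x => by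
    rw [hSY, hSY]; exact shift_tsum g hgsum x
  have hSXnn : ∀ x, 0 ≤ SX x := fun x => by
    rw [hSX]; exact tsum_nonneg fun i => hf0 _
  have hSYnn : ∀ x, 0 ≤ SY x := fun x => by
    rw [hSY]; exact tsum_nonneg fun i => hg0 _
  -- key inequality: SX (x+1) * g x ≤ f x * SY (x+1)
  have hkey : ∀ x : ℕ, SX (x + 1) * g x ≤ f x * SY (x + 1) := by
    intro x
    by_cases hgx : g x = 0
    · rw [hgx, hgz x hgx, mul_zero, zero_mul]
    have hgxpos : 0 < g x := (hg0 x).lt_of_ne (Ne.symm hgx)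
    rcases le_or_gt x x₀ with hle | hlt
    · -- increasing part: SX (x+1) ≤ SY (x+1) and g x ≤ f x
      have hfge : ∀ i : ℕ, i ≤ x₀ → g i ≤ f i := by
        intro i hi
        by_cases hgi : g i = 0
        · rw [hgi, hgz i hgi]
        · have := (hl0.trans (hinc 0 i (Nat.zero_le i) hi hg00 hgi))
          have hgipos : 0 < g i := (hg0 i).lt_of_ne (Ne.symm hgi)
          exact ((one_le_div hgipos).mp this)
      have hXY : SX (x + 1) ≤ SY (x + 1) := by
        rw [hSX, hSY, tail_eq f hfsum hf1, tail_eq g hgsum hg1]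
        have : ∑ i ∈ Finset.range (x+1), g i ≤ ∑ i ∈ Finset.range (x+1), f i :=
          Finset.sum_le_sum fun i hi =>
            hfge i (le_trans (Nat.lt_succ_iff.mp (Finset.mem_range.mp hi)) hle)
        linarith
      have h1 : SX (x+1) * g x ≤ SY (x+1) * g x :=
        mul_le_mul_of_nonneg_right hXY (hg0 x)
      have h2 : SY (x+1) * g x ≤ SY (x+1) * f x :=
        mul_le_mul_of_nonneg_left (hfge x hle) (hSYnn (x+1))
      linarith
    · -- decreasing part: termwise comparison
      have hterm : ∀ i : ℕ, g x * f (x + 1 + i) ≤ f x * g (x + 1 + i) := by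
        intro i
        set j := x + 1 + i with hj
        by_cases hgj : g j = 0
        · rw [hgj, hgz j hgj, mul_zero, mul_zero]
        have hgjpos : 0 < g j := (hg0 j).lt_of_ne (Ne.symm hgj)
        have := hdec x j hlt.le (by omega) hgx hgj
        rw [div_le_div_iff₀ hgjpos hgxpos] at this
        linarith
      have hs1 : Summable (fun i => g x * f (x + 1 + i)) :=
        (shift_summable f hfsum (x+1)).mul_left _
      have hs2 : Summable (fun i => f x * g (x + 1 + i)) :=
        (shift_summable g hgsum (x+1)).mul_left _
      have := Summable.tsum_le_tsum hterm hs1 hs2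
      rw [tsum_mul_left, tsum_mul_left] at this
      rw [hSX, hSY]
      linarith [this]
  -- one step
  have hstep : ∀ x : ℕ, 0 < SY (x + 1) → SX (x+1) / SY (x+1) ≤ SX x / SY x := by
    intro x hpos
    have hpos' : 0 < SY x := by
      rw [hSYrec x]; have := hg0 x; linarith
    rw [div_le_div_iff₀ hpos hpos', hSXrec x, hSYrec x]
    have := hkey x
    have := hSXnn (x+1)
    nlinarith
  -- chain
  have hchain : ∀ n x : ℕ, 0 < SY (x + n) → SX (x + n) / SY (x + n) ≤ SX x / SY x := by
    intro n
    induction n with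
    | zero => intro x _; simp
    | succ n ih =>
      intro x hpos
      have h1 : SX (x + n + 1) / SY (x + n + 1) ≤ SX (x + n) / SY (x + n) :=
        hstep (x + n) (by rwa [show x + (n+1) = x + n + 1 by omega] at hpos)
      have h2 : 0 < SY (x + n) := by
        rw [hSYrec (x + n)]
        have ha := hg0 (x + n)
        have hb : 0 < SY (x + n + 1) := by
          rwa [show x + (n+1) = x + n + 1 by omega] at hpos
        linarith
      calc SX (x + (n+1)) / SY (x + (n+1))
          = SX (x + n + 1) / SY (x + n + 1) := by rw [show x + (n+1) = x + n + 1 by omega]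
        _ ≤ SX (x + n) / SY (x + n) := h1
        _ ≤ SX x / SY x := ih x h2
  intro x y hxy hpos
  have := hchain (y - x) x (by rwa [show x + (y - x) = y by omega])
  rwa [show x + (y - x) = y by omega] at this
end

section
/- Let X, Y be discrete random variables on ℕ with finite means such that S_X/S_Y is strictly unimodal (strictly increasing on {0,...,k₀}, then decreasing) with S_X(0) = S_Y(0) = 1, and E[X] ≤ E[Y]. Then there exists x with S_X(x) > S_Y(x) and there exists x' with S_X(x') < S_Y(x'); in particular neither X ≤_st Y nor Y ≤_st X holds. -/
/-- Remark 3: if the survival ratio `SX/SY` is strictly unimodal (strictly increasing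
on `{0,…,k₀}` then nonincreasing), `SX 0 = SY 0 = 1` and `E[X] ≤ E[Y]`, then the
survival functions cross: there is `x` with `SX x > SY x` and `x'` with
`SX x' < SY x'`; in particular neither `X ≤_st Y` nor `Y ≤_st X` holds. -/
theorem strict_unimodal_ratio_no_st_order
    (f g : ℕ → ℝ) (hf0 : ∀ x, 0 ≤ f x) (hg0 : ∀ x, 0 ≤ g x)
    (hfsum : Summable f) (hgsum : Summable g)
    (hf1 : ∑' x : ℕ, f x = 1) (hg1 : ∑' x : ℕ, g x = 1)
    (SX SY : ℕ → ℝ)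
    (hSX : ∀ x, SX x = ∑' i : ℕ, f (x + i))
    (hSY : ∀ x, SY x = ∑' i : ℕ, g (x + i))
    (hSXsum : Summable SX) (hSYsum : Summable SY)
    (hSX0 : SX 0 = 1) (hSY0 : SY 0 = 1)
    (hunim : ∃ k₀ : ℕ, 0 < k₀ ∧
      (∀ x y : ℕ, x < y → y ≤ k₀ → SX x / SY x < SX y / SY y) ∧
      (∀ x y : ℕ, k₀ ≤ x → x ≤ y → SX y / SY y ≤ SX x / SY x))
    (hmean : (∑' x : ℕ, SX (x + 1)) ≤ ∑' x : ℕ, SY (x + 1)) :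
    (∃ x : ℕ, SY x < SX x) ∧ (∃ x' : ℕ, SX x' < SY x') := by
  obtain ⟨k₀, hk₀, hinc, _⟩ := hunim
  have hr : SX 0 / SY 0 < SX 1 / SY 1 := hinc 0 1 one_pos hk₀
  rw [hSX0, hSY0, div_one] at hr
  have hSY1pos : 0 < SY 1 := by
    rcases lt_or_eq_of_le ((hSY 1) ▸ tsum_nonneg (fun i => hg0 (1 + i))) with h | h
    · exact h
    · rw [← h, div_zero] at hr; linarith
  have h1 : SY 1 < SX 1 := (one_lt_div hSY1pos).mp hr
  refine ⟨⟨1, h1⟩, ?_⟩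
  by_contra h
  push_neg at h
  have hlt : (∑' x : ℕ, SY (x + 1)) < ∑' x : ℕ, SX (x + 1) :=
    Summable.tsum_lt_tsum (f := fun x => SY (x + 1)) (g := fun x => SX (x + 1))
      (fun i => h (i + 1)) (i := 0) h1 (hg := (summable_nat_add_iff 1).mpr hSXsum) (((summable_nat_add_iff 1).mpr hSYsum))
  linarith
end

section
/- For binomial random variables X ~ B(n₁, p₁) and Y ~ B(n₂, p₂) with n₁ ≤ n₂, the likelihood ratio l(x) = f_X(x)/f_Y(x) restricted to {0,...,n₁} is logconcave, and X ≤_lr Y if and only if n₁p₁(1 − p₂) ≤ n₂p₂(1 − p₁). -/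
lemma binom_aux_nat (a0 a1 a2 b0 b1 b2 k m e : ℕ)
    (h1 : a2*(k+2) = a1*(m+1)) (h2 : a1*(k+1) = a0*(m+2))
    (h3 : b2*(k+2) = b1*(m+e+1)) (h4 : b1*(k+1) = b0*(m+e+2)) :
    a2*a0*b1^2 ≤ a1^2*(b2*b0) := by
  apply Nat.le_of_mul_le_mul_right _ (show 0 < (k+2)*(k+1) by positivity)
  calc a2*a0*b1^2*((k+2)*(k+1))
      = (a2*(k+2))*(b1*(k+1))*(a0*b1) := by ring
    _ = (a1*(m+1))*(b0*(m+e+2))*(a0*b1) := by rw [h1, h4]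
    _ = (a1*a0*b0*b1)*((m+1)*(m+e+2)) := by ring
    _ ≤ (a1*a0*b0*b1)*((m+2)*(m+e+1)) := Nat.mul_le_mul_left _ (by nlinarith)
    _ = (a0*(m+2))*(b1*(m+e+1))*(a1*b0) := by ring
    _ = (a1*(k+1))*(b2*(k+2))*(a1*b0) := by rw [h2, h3]
    _ = a1^2*(b2*b0)*((k+2)*(k+1)) := by ring

/-- For binomial random variables `X ~ B(n₁,p₁)` and `Y ~ B(n₂,p₂)` with `n₁ ≤ n₂`,
the likelihood ratio `l x = f_X x / f_Y x` is logconcave on `{0,…,n₁}`, and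
`X ≤_lr Y` (the likelihood ratio is nonincreasing on the union of supports, with the
convention `a/0 = +∞`, encoded via cross-multiplication) iff
`n₁ p₁ (1-p₂) ≤ n₂ p₂ (1-p₁)`. -/
theorem binomial_lr_iff (n₁ n₂ : ℕ) (p₁ p₂ : ℝ)
    (hn : n₁ ≤ n₂) (hp₁ : 0 < p₁) (hp₁' : p₁ < 1) (hp₂ : 0 < p₂) (hp₂' : p₂ < 1)
    (fX fY : ℕ → ℝ)
    (hfX : ∀ x : ℕ, fX x = (n₁.choose x : ℝ) * p₁ ^ x * (1 - p₁) ^ (n₁ - x))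
    (hfY : ∀ x : ℕ, fY x = (n₂.choose x : ℝ) * p₂ ^ x * (1 - p₂) ^ (n₂ - x)) :
    (∀ x : ℕ, 1 ≤ x → x + 1 ≤ n₁ →
        (fX (x + 1) / fY (x + 1)) * (fX (x - 1) / fY (x - 1)) ≤ (fX x / fY x) ^ 2) ∧
    ((∀ x y : ℕ, x ≤ y → y ≤ n₂ → fX y * fY x ≤ fX x * fY y)
      ↔ (n₁ : ℝ) * p₁ * (1 - p₂) ≤ (n₂ : ℝ) * p₂ * (1 - p₁)) := by
  have h1p₁ : (0:ℝ) < 1 - p₁ := by linarith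
  have h1p₂ : (0:ℝ) < 1 - p₂ := by linarith
  have hfXnn : ∀ z : ℕ, 0 ≤ fX z := by
    intro z; rw [hfX]; positivity
  have hfYpos : ∀ z : ℕ, z ≤ n₂ → 0 < fY z := by
    intro z hz; rw [hfY]
    have hc : (0:ℝ) < n₂.choose z := by exact_mod_cast Nat.choose_pos hz
    positivity
  constructor
  · -- logconcavity
    intro x hx1 hxn
    obtain ⟨k, rfl⟩ : ∃ k, x = k + 1 := ⟨x - 1, by omega⟩
    obtain ⟨m, hm⟩ : ∃ m, n₁ = k + 2 + m := ⟨n₁ - (k+2), by omega⟩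
    obtain ⟨e, he⟩ : ∃ e, n₂ = k + 2 + m + e := ⟨n₂ - (k+2+m), by omega⟩
    have hY1 : 0 < fY (k+1+1) := hfYpos _ (by omega)
    have hY0 : 0 < fY (k+1-1) := hfYpos _ (by omega)
    have hYm : 0 < fY (k+1) := hfYpos _ (by omega)
    rw [div_mul_div_comm, div_pow, div_le_div_iff₀ (by positivity) (by positivity)]
    have e1 : k+1+1 = k+2 := rfl
    have e2 : k+1-1 = k := rfl
    rw [e1, e2, hfX, hfX, hfX, hfY, hfY, hfY]
    subst hm he
    rw [show k+2+m - (k+2) = m from by omega, show k+2+m-(k+1) = m+1 from by omega,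
        show k+2+m-k = m+2 from by omega, show k+2+m+e-(k+2) = m+e from by omega,
        show k+2+m+e-(k+1) = m+e+1 from by omega, show k+2+m+e-k = m+e+2 from by omega]
    have hc1 : (k+2+m).choose (k+2) * (k+2) = (k+2+m).choose (k+1) * (m+1) := by
      have := Nat.choose_succ_right_eq (k+2+m) (k+1)
      rwa [show k+2+m-(k+1) = m+1 from by omega] at this
    have hc2 : (k+2+m).choose (k+1) * (k+1) = (k+2+m).choose k * (m+2) := by
      have := Nat.choose_succ_right_eq (k+2+m) k
      rwa [show k+2+m-k = m+2 from by omega] at this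
    have hc3 : (k+2+m+e).choose (k+2) * (k+2) = (k+2+m+e).choose (k+1) * (m+e+1) := by
      have := Nat.choose_succ_right_eq (k+2+m+e) (k+1)
      rwa [show k+2+m+e-(k+1) = m+e+1 from by omega] at this
    have hc4 : (k+2+m+e).choose (k+1) * (k+1) = (k+2+m+e).choose k * (m+e+2) := by
      have := Nat.choose_succ_right_eq (k+2+m+e) k
      rwa [show k+2+m+e-k = m+e+2 from by omega] at this
    have key := binom_aux_nat ((k+2+m).choose k) ((k+2+m).choose (k+1)) ((k+2+m).choose (k+2))
      ((k+2+m+e).choose k) ((k+2+m+e).choose (k+1)) ((k+2+m+e).choose (k+2)) k m e hc1 hc2 hc3 hc4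
    have keyR : ((k+2+m).choose (k+2) : ℝ) * ((k+2+m).choose k : ℝ) * ((k+2+m+e).choose (k+1) : ℝ)^2
        ≤ ((k+2+m).choose (k+1) : ℝ)^2 * (((k+2+m+e).choose (k+2) : ℝ) * ((k+2+m+e).choose k : ℝ)) := by
      exact_mod_cast key
    have main := mul_le_mul_of_nonneg_right keyR
      (sq_nonneg (p₁^(k+1)*(1-p₁)^(m+1)*p₂^(k+1)*(1-p₂)^(m+e+1)))
    refine le_trans (le_of_eq ?_) (le_trans main (le_of_eq ?_))
    · ring
    · ring
  · -- lr order iff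
    constructor
    · -- forward
      intro h
      rcases Nat.eq_zero_or_pos n₁ with h0 | h1
      · subst h0
        simp only [Nat.cast_zero, zero_mul]
        positivity
      · obtain ⟨m, rfl⟩ : ∃ m, n₁ = m + 1 := ⟨n₁ - 1, by omega⟩
        obtain ⟨l, rfl⟩ : ∃ l, n₂ = l + 1 := ⟨n₂ - 1, by omega⟩
        have h01 := h 0 1 (by omega) (by omega)
        rw [hfX, hfX, hfY, hfY] at h01
        simp only [Nat.choose_one_right, Nat.choose_zero_right, pow_zero, pow_one,
          Nat.cast_one, one_mul, mul_one, Nat.sub_zero, Nat.add_sub_cancel] at h01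
        refine le_of_mul_le_mul_right ?_ (show (0:ℝ) < (1-p₁)^m*(1-p₂)^l by positivity)
        refine le_trans (le_of_eq ?_) (le_trans h01 (le_of_eq ?_))
        · push_cast; ring
        · push_cast; ring
    · -- backward
      intro hcond x y hxy hyn₂
      rcases le_or_gt y n₁ with hyn₁ | hyn₁
      · -- step lemma
        have step : ∀ z : ℕ, z + 1 ≤ n₁ → fX (z+1) * fY z ≤ fX z * fY (z+1) := by
          intro z hz
          obtain ⟨m, hm⟩ : ∃ m, n₁ = z + 1 + m := ⟨n₁ - (z+1), by omega⟩
          obtain ⟨e, he⟩ : ∃ e, n₂ = z + 1 + m + e := ⟨n₂ - (z+1+m), by omega⟩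
          have hc1 : n₁.choose (z+1) * (z+1) = n₁.choose z * (m+1) := by
            have := Nat.choose_succ_right_eq n₁ z
            rwa [show n₁ - z = m+1 from by omega] at this
          have hc2 : n₂.choose (z+1) * (z+1) = n₂.choose z * (m+e+1) := by
            have := Nat.choose_succ_right_eq n₂ z
            rwa [show n₂ - z = m+e+1 from by omega] at this
          have hc1R : (n₁.choose (z+1) : ℝ) * ((z:ℝ)+1) = (n₁.choose z : ℝ) * ((m:ℝ)+1) := by
            exact_mod_cast hc1
          have hc2R : (n₂.choose (z+1) : ℝ) * ((z:ℝ)+1) = (n₂.choose z : ℝ) * ((m:ℝ)+(e:ℝ)+1) := by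
            exact_mod_cast hc2
          have hcond' : ((z:ℝ)+1+(m:ℝ)) * (p₁*(1-p₂)) ≤ ((z:ℝ)+1+(m:ℝ)+(e:ℝ)) * (p₂*(1-p₁)) := by
            have h' := hcond
            rw [hm, he] at h'
            push_cast at h'
            nlinarith [h']
          have hZ : (0:ℝ) ≤ (z:ℝ) := Nat.cast_nonneg z
          have hM : (0:ℝ) ≤ (m:ℝ) := Nat.cast_nonneg m
          have hE : (0:ℝ) ≤ (e:ℝ) := Nat.cast_nonneg e
          have hstep' : ((m:ℝ)+1)*(p₁*(1-p₂)) ≤ ((m:ℝ)+(e:ℝ)+1)*(p₂*(1-p₁)) := by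
            nlinarith [hcond', mul_nonneg (mul_nonneg (mul_pos hp₂ h1p₁).le hE) hZ,
              mul_pos hp₁ h1p₂, mul_pos hp₂ h1p₁, hZ, hM, hE]
          refine le_of_mul_le_mul_right ?_ (show (0:ℝ) < (z:ℝ)+1 by positivity)
          rw [hfX, hfX, hfY, hfY,
            show n₁ - (z+1) = m from by omega, show n₁ - z = m+1 from by omega,
            show n₂ - (z+1) = m+e from by omega, show n₂ - z = m+e+1 from by omega]
          have hQ : (0:ℝ) ≤ (n₁.choose z : ℝ) * (n₂.choose z : ℝ) * p₁^z * p₂^z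
              * (1-p₁)^m * (1-p₂)^(m+e) := by positivity
          have main := mul_le_mul_of_nonneg_left hstep' hQ
          refine le_trans (le_of_eq ?_) (le_trans main (le_of_eq ?_))
          · linear_combination (p₁^(z+1) * (1-p₁)^m * (n₂.choose z : ℝ) * p₂^z * (1-p₂)^(m+e+1)) * hc1R
          · linear_combination (-((n₁.choose z : ℝ) * p₁^z * (1-p₁)^(m+1) * p₂^(z+1) * (1-p₂)^(m+e))) * hc2R
        -- induction from x to y
        clear hyn₂
        induction y, hxy using Nat.le_induction with
        | base => exact le_rfl
        | succ y hy ih =>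
          have hyx : x ≤ n₁ := by omega
          have ihy := ih (by omega)
          have A := step y (by omega)
          have hYx : 0 < fY x := hfYpos _ (by omega)
          have hYy : 0 < fY y := hfYpos _ (by omega)
          have hYy1 : 0 < fY (y+1) := hfYpos _ (by omega)
          refine le_of_mul_le_mul_right ?_ hYy
          calc fX (y+1) * fY x * fY y = (fX (y+1) * fY y) * fY x := by ring
            _ ≤ (fX y * fY (y+1)) * fY x := mul_le_mul_of_nonneg_right A hYx.le
            _ = (fX y * fY x) * fY (y+1) := by ring
            _ ≤ (fX x * fY y) * fY (y+1) := mul_le_mul_of_nonneg_right ihy hYy1.le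
            _ = fX x * fY (y+1) * fY y := by ring
      · -- y > n₁ : fX y = 0
        have hXy : fX y = 0 := by
          rw [hfX, Nat.choose_eq_zero_of_lt hyn₁]
          simp
        rw [hXy, zero_mul]
        exact mul_nonneg (hfXnn x) (hfYpos y hyn₂).le
end

section
/- For negative binomial random variables X ~ NB(p₁, r₁) and Y ~ NB(p₂, r₂) with r₁ ≥ r₂, we have X ≤_lr Y if and only if r₁(1 − p₁) ≤ r₂(1 − p₂). -/
/-!
The successive ratio of the negative binomial mass is `f(x+1)/f(x) = (r+x)(1-p)/(x+1)`, so
`X ≤_lr Y` amounts to `(r₁+x)(1-p₁) ≤ (r₂+x)(1-p₂)` for every `x ∈ ℕ`. At `x = 0` this is the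
stated condition; conversely, since `r₁ ≥ r₂`, that condition forces `1-p₁ ≤ 1-p₂`, and adding
`x(1-p₁) ≤ x(1-p₂)` gives every other `x`.
-/

noncomputable def negBinomialMass (r : ℕ) (p : ℝ) (x : ℕ) : ℝ :=
  ((r + x - 1).choose x : ℝ) * p ^ r * (1 - p) ^ x

theorem antitone_div_iff_forall_succ_mul_le {α : Type*} [Field α] [LinearOrder α]
    [IsStrictOrderedRing α] {f g : ℕ → α} (hg : ∀ n, 0 < g n) :
    Antitone (fun n => f n / g n) ↔ ∀ n, f (n + 1) * g n ≤ f n * g (n + 1) := by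
  simp_rw [← div_le_div_iff₀ (hg _) (hg _)]
  exact ⟨fun h n => h n.le_succ, antitone_nat_of_succ_le (f := fun n => f n / g n)⟩

theorem forall_nat_add_mul_le_add_mul_iff {α : Type*} [Field α] [LinearOrder α]
    [IsStrictOrderedRing α] {a₁ a₂ q₁ q₂ : α} (ha : a₂ ≤ a₁) (ha₁ : 0 < a₁) (hq₂ : 0 ≤ q₂) :
    (∀ x : ℕ, (a₁ + x) * q₁ ≤ (a₂ + x) * q₂) ↔ a₁ * q₁ ≤ a₂ * q₂ := by
  refine ⟨fun h => by simpa using h 0, fun h x => ?_⟩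
  have hq : q₁ ≤ q₂ := le_of_mul_le_mul_left (h.trans (mul_le_mul_of_nonneg_right ha hq₂)) ha₁
  have : (x : α) * q₁ ≤ x * q₂ := mul_le_mul_of_nonneg_left hq x.cast_nonneg
  linarith

theorem Nat.succ_mul_choose_succ_eq (n k : ℕ) :
    (k + 1) * n.choose (k + 1) = n * (n - 1).choose k := by
  rcases n with _ | n
  · simp
  · rw [mul_comm, ← Nat.add_one_mul_choose_eq, Nat.add_sub_cancel]

namespace negBinomialMass

theorem pos {r : ℕ} {p : ℝ} (hr : 1 ≤ r) (hp₀ : 0 < p) (hp₁ : p < 1) (x : ℕ) :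
    0 < negBinomialMass r p x := by
  have : 0 < (r + x - 1).choose x := Nat.choose_pos (by omega)
  have : 0 < 1 - p := by linarith
  unfold negBinomialMass
  positivity

theorem succ_mul_succ (r : ℕ) (p : ℝ) (x : ℕ) :
    (x + 1) * negBinomialMass r p (x + 1) = (r + x) * (1 - p) * negBinomialMass r p x := by
  have h := congrArg (Nat.cast (R := ℝ)) (Nat.succ_mul_choose_succ_eq (r + x) x)
  push_cast at h
  unfold negBinomialMass
  rw [show r + (x + 1) - 1 = r + x by omega]
  linear_combination p ^ r * (1 - p) ^ (x + 1) * h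

theorem succ_mul_le_mul_succ_iff {r₁ r₂ : ℕ} {p₁ p₂ : ℝ} {x : ℕ}
    (hpos : 0 < negBinomialMass r₁ p₁ x * negBinomialMass r₂ p₂ x) :
    negBinomialMass r₁ p₁ (x + 1) * negBinomialMass r₂ p₂ x ≤
        negBinomialMass r₁ p₁ x * negBinomialMass r₂ p₂ (x + 1) ↔
      (r₁ + x) * (1 - p₁) ≤ (r₂ + x) * (1 - p₂) := by
  have e₁ : (x + 1) * (negBinomialMass r₁ p₁ (x + 1) * negBinomialMass r₂ p₂ x) =
      (r₁ + x) * (1 - p₁) * (negBinomialMass r₁ p₁ x * negBinomialMass r₂ p₂ x) := by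
    rw [← mul_assoc, succ_mul_succ]; ring
  have e₂ : (x + 1) * (negBinomialMass r₁ p₁ x * negBinomialMass r₂ p₂ (x + 1)) =
      (r₂ + x) * (1 - p₂) * (negBinomialMass r₁ p₁ x * negBinomialMass r₂ p₂ x) := by
    rw [mul_left_comm, succ_mul_succ]; ring
  rw [← mul_le_mul_iff_right₀ (by positivity : (0 : ℝ) < x + 1), e₁, e₂,
    mul_le_mul_iff_left₀ hpos]

end negBinomialMass

/-- For negative binomial random variables `X ~ NB(p₁,r₁)` and `Y ~ NB(p₂,r₂)` with
`r₁ ≥ r₂ ≥ 1`, we have `X ≤_lr Y` (the likelihood ratio is nonincreasing on ℕ) iff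
`r₁(1-p₁) ≤ r₂(1-p₂)`. -/
theorem negbinomial_lr_iff (r₁ r₂ : ℕ) (p₁ p₂ : ℝ)
    (hr₂ : 1 ≤ r₂) (hr : r₂ ≤ r₁)
    (hp₁ : 0 < p₁) (hp₁' : p₁ < 1) (hp₂ : 0 < p₂) (hp₂' : p₂ < 1)
    (fX fY : ℕ → ℝ)
    (hfX : ∀ x : ℕ, fX x = ((r₁ + x - 1).choose x : ℝ) * p₁ ^ r₁ * (1 - p₁) ^ x)
    (hfY : ∀ x : ℕ, fY x = ((r₂ + x - 1).choose x : ℝ) * p₂ ^ r₂ * (1 - p₂) ^ x) :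
    (∀ x y : ℕ, x ≤ y → fX y / fY y ≤ fX x / fY x)
      ↔ (r₁ : ℝ) * (1 - p₁) ≤ (r₂ : ℝ) * (1 - p₂) := by
  obtain rfl : fX = negBinomialMass r₁ p₁ := funext hfX
  obtain rfl : fY = negBinomialMass r₂ p₂ := funext hfY
  have hpos₁ := negBinomialMass.pos (hr₂.trans hr) hp₁ hp₁'
  have hpos₂ := negBinomialMass.pos hr₂ hp₂ hp₂'
  calc Antitone (fun x => negBinomialMass r₁ p₁ x / negBinomialMass r₂ p₂ x)
      ↔ ∀ x, negBinomialMass r₁ p₁ (x + 1) * negBinomialMass r₂ p₂ x ≤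
          negBinomialMass r₁ p₁ x * negBinomialMass r₂ p₂ (x + 1) :=
        antitone_div_iff_forall_succ_mul_le hpos₂
    _ ↔ ∀ x : ℕ, ((r₁ : ℝ) + x) * (1 - p₁) ≤ (r₂ + x) * (1 - p₂) :=
        forall_congr' fun x =>
          negBinomialMass.succ_mul_le_mul_succ_iff (mul_pos (hpos₁ x) (hpos₂ x))
    _ ↔ _ := forall_nat_add_mul_le_add_mul_iff (by exact_mod_cast hr)
        (by exact_mod_cast hr₂.trans hr) (by linarith)
end

section
/- Let X ~ W(α₁, β₁) and Y ~ W(α₂, β₂) be discrete Weibull random variables with β₁ ≥ β₂ and survival functions S_X(x) = q₁^{x^{β₁}}, S_Y(x) = q₂^{x^{β₂}} where qᵢ = exp(−1/αᵢ^{βᵢ}). Then S_X(x)/S_Y(x) is nonincreasing on ℕ (i.e., X ≤_hr Y) if and only if α₁^{β₁} ≤ α₂^{β₂}. -/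
open Real

lemma weibull_aux_diff (m n β₁ β₂ : ℝ) (hm : 1 ≤ m) (hmn : m ≤ n)
    (hβ₂ : 0 ≤ β₂) (hβ : β₂ ≤ β₁) :
    n ^ β₂ - m ^ β₂ ≤ n ^ β₁ - m ^ β₁ := by
  have hm0 : 0 < m := lt_of_lt_of_le one_pos hm
  have hr : 1 ≤ n / m := (one_le_div hm0).2 hmn
  have hn : n = m * (n / m) := by field_simp
  have h1 : m ^ β₂ ≤ m ^ β₁ := Real.rpow_le_rpow_of_exponent_le hm hβ
  have h2 : (n / m) ^ β₂ ≤ (n / m) ^ β₁ := Real.rpow_le_rpow_of_exponent_le hr hβ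
  have h3 : (1 : ℝ) ≤ (n / m) ^ β₂ := Real.one_le_rpow hr hβ₂
  have h4 : (0 : ℝ) ≤ m ^ β₂ := Real.rpow_nonneg hm0.le _
  rw [hn, Real.mul_rpow hm0.le (by positivity), Real.mul_rpow hm0.le (by positivity)]
  nlinarith [mul_le_mul h1 h2 (by linarith) (Real.rpow_nonneg hm0.le β₁)]

/-- For discrete Weibull random variables `X ~ W(α₁,β₁)`, `Y ~ W(α₂,β₂)` with
`β₁ ≥ β₂` and survival functions `S x = q^{x^β}` where `q = exp(-1/α^β)`, the ratio
`S_X x / S_Y x` is nonincreasing on ℕ (i.e. `X ≤_hr Y`) iff `α₁^β₁ ≤ α₂^β₂`. -/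
theorem discrete_weibull_hr_iff (α₁ α₂ β₁ β₂ : ℝ)
    (hα₁ : 0 < α₁) (hα₂ : 0 < α₂) (hβ₂ : 0 < β₂) (hβ : β₂ ≤ β₁)
    (SX SY : ℕ → ℝ)
    (hSX : ∀ x : ℕ, SX x = (Real.exp (-1 / α₁ ^ β₁)) ^ ((x : ℝ) ^ β₁))
    (hSY : ∀ x : ℕ, SY x = (Real.exp (-1 / α₂ ^ β₂)) ^ ((x : ℝ) ^ β₂)) :
    Antitone (fun x : ℕ => SX x / SY x) ↔ α₁ ^ β₁ ≤ α₂ ^ β₂ := by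
  have hβ₁ : 0 < β₁ := lt_of_lt_of_le hβ₂ hβ
  have ha₁ : 0 < α₁ ^ β₁ := Real.rpow_pos_of_pos hα₁ _
  have ha₂ : 0 < α₂ ^ β₂ := Real.rpow_pos_of_pos hα₂ _
  set a₁ := α₁ ^ β₁ with ha₁def
  set a₂ := α₂ ^ β₂ with ha₂def
  -- the exponent function
  set g : ℕ → ℝ := fun x => (x : ℝ) ^ β₂ / a₂ - (x : ℝ) ^ β₁ / a₁ with hg
  have hfun : ∀ x : ℕ, SX x / SY x = Real.exp (g x) := by
    intro x
    rw [hSX, hSY, ← Real.exp_mul, ← Real.exp_mul, ← Real.exp_sub, hg]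
    ring_nf
  have hanti : Antitone (fun x : ℕ => SX x / SY x) ↔ Antitone g := by
    constructor
    · intro h m n hmn
      have := h hmn
      simp only [hfun] at this
      exact (Real.exp_le_exp).1 this
    · intro h m n hmn
      simp only [hfun]
      exact (Real.exp_le_exp).2 (h hmn)
  rw [hanti]
  constructor
  · intro h
    have h01 := h (show (0:ℕ) ≤ 1 by norm_num)
    simp only [hg, Nat.cast_one, Nat.cast_zero, Real.one_rpow,
      Real.zero_rpow hβ₁.ne', Real.zero_rpow hβ₂.ne', zero_div, sub_zero] at h01
    have h1 : 1 / a₂ ≤ 1 / a₁ := by linarith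
    rw [div_le_div_iff₀ ha₂ ha₁] at h1
    linarith
  · intro h m n hmn
    have hb : a₂⁻¹ ≤ a₁⁻¹ := by
      rw [inv_le_inv₀ ha₂ ha₁]; exact h
    have hb₁ : 0 ≤ a₁⁻¹ := by positivity
    have hb₂ : 0 ≤ a₂⁻¹ := by positivity
    have hmn' : (m : ℝ) ≤ n := Nat.cast_le.2 hmn
    simp only [hg, div_eq_mul_inv]
    rcases Nat.eq_zero_or_pos m with hm0 | hm1
    · subst hm0
      simp only [Nat.cast_zero, Real.zero_rpow hβ₁.ne', Real.zero_rpow hβ₂.ne',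
        zero_mul, sub_zero]
      rcases Nat.eq_zero_or_pos n with hn0 | hn1
      · subst hn0
        simp [Real.zero_rpow hβ₁.ne', Real.zero_rpow hβ₂.ne']
      · have hn1' : (1 : ℝ) ≤ n := by exact_mod_cast hn1
        have h2 : (n : ℝ) ^ β₂ ≤ (n : ℝ) ^ β₁ :=
          Real.rpow_le_rpow_of_exponent_le hn1' hβ
        have h3 : (0 : ℝ) ≤ (n : ℝ) ^ β₂ := Real.rpow_nonneg (by positivity) _
        nlinarith [mul_le_mul h2 hb (by positivity) (Real.rpow_nonneg (by positivity : (0:ℝ) ≤ n) β₁)]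
    · have hm1' : (1 : ℝ) ≤ m := by exact_mod_cast hm1
      have hd := weibull_aux_diff m n β₁ β₂ hm1' hmn' hβ₂.le hβ
      have hd2 : (0 : ℝ) ≤ (n : ℝ) ^ β₂ - (m : ℝ) ^ β₂ := by
        have := Real.rpow_le_rpow (by positivity : (0:ℝ) ≤ m) hmn' hβ₂.le
        linarith
      nlinarith [mul_le_mul hb hd hd2 hb₁]
end

section
/- For the Panjer family with parameters (a₁, b₁) and (a₂, b₂): if f_X(x) = ((a₁x + b₁)/x) f_X(x−1) and f_Y(x) = ((a₂x + b₂)/x) f_Y(x−1) for x ≥ 1 with all mass function values positive on the common support, then l(x)/l(x−1) = (a₁x + b₁)/(a₂x + b₂), and this ratio is nonincreasing in x (equivalently l is logconcave) if and only if a₁b₂ ≤ a₂b₁. -/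
/-- Panjer family: if `f_X`, `f_Y` satisfy the Panjer recursions with parameters
`(a₁,b₁)` and `(a₂,b₂)` and are positive on the common support `{0,…,N}` (with
`N ≥ 2` and positive denominators `a₂ x + b₂`), then the likelihood ratio
`l x = f_X x / f_Y x` satisfies `l x / l (x-1) = (a₁ x + b₁)/(a₂ x + b₂)` for
`1 ≤ x ≤ N`, and this ratio is nonincreasing in `x` (equivalently, `l` is logconcave)
iff `a₁ b₂ ≤ a₂ b₁`. -/
theorem panjer_ratio_logconcave_iff (a₁ b₁ a₂ b₂ : ℝ) (N : ℕ) (hN : 2 ≤ N)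
    (fX fY : ℕ → ℝ)
    (hrecX : ∀ x : ℕ, 1 ≤ x → x ≤ N → fX x = ((a₁ * x + b₁) / x) * fX (x - 1))
    (hrecY : ∀ x : ℕ, 1 ≤ x → x ≤ N → fY x = ((a₂ * x + b₂) / x) * fY (x - 1))
    (hfX : ∀ x : ℕ, x ≤ N → 0 < fX x) (hfY : ∀ x : ℕ, x ≤ N → 0 < fY x)
    (hden₁ : ∀ x : ℕ, 1 ≤ x → x ≤ N → 0 < a₁ * x + b₁)
    (hden₂ : ∀ x : ℕ, 1 ≤ x → x ≤ N → 0 < a₂ * x + b₂) :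
    (∀ x : ℕ, 1 ≤ x → x ≤ N →
        (fX x / fY x) / (fX (x - 1) / fY (x - 1)) = (a₁ * x + b₁) / (a₂ * x + b₂)) ∧
    ((∀ x y : ℕ, 1 ≤ x → x ≤ y → y ≤ N →
        (a₁ * y + b₁) / (a₂ * y + b₂) ≤ (a₁ * x + b₁) / (a₂ * x + b₂))
      ↔ a₁ * b₂ ≤ a₂ * b₁) := by
  constructor
  · intro x hx1 hxN
    have hx0 : (0:ℝ) < (x:ℝ) := by exact_mod_cast hx1
    have hX' := hfX (x-1) (le_trans (Nat.sub_le x 1) hxN)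
    have hY' := hfY (x-1) (le_trans (Nat.sub_le x 1) hxN)
    have h1 := hden₁ x hx1 hxN
    have h2 := hden₂ x hx1 hxN
    rw [hrecX x hx1 hxN, hrecY x hx1 hxN]
    field_simp
  · constructor
    · intro h
      have h12 := h 1 2 le_rfl (by norm_num) hN
      have hd1 := hden₂ 1 le_rfl (le_trans (by norm_num) hN)
      have hd2 := hden₂ 2 (by norm_num) hN
      push_cast at h12 hd1 hd2
      rw [div_le_div_iff₀ hd2 hd1] at h12
      nlinarith
    · intro h x y hx1 hxy hyN
      have hd1 := hden₂ x hx1 (le_trans hxy hyN)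
      have hd2 := hden₂ y (le_trans hx1 hxy) hyN
      have hxy' : (x:ℝ) ≤ (y:ℝ) := by exact_mod_cast hxy
      rw [div_le_div_iff₀ hd2 hd1]
      nlinarith [mul_nonneg (sub_nonneg.mpr h) (sub_nonneg.mpr hxy')]
end

section
/- Let X, Y be discrete random variables on ℕ with Supp(X) ⊆ Supp(Y), and suppose l(x) = f_X(x)/f_Y(x) is increasing on {0,...,k₀} for some k₀. Then the function t(x) = S_X(x) − l(x) S_Y(x) is nonincreasing on {0,...,k₀}. -/
/-- If `Supp(X) ⊆ Supp(Y)` and the likelihood ratio `l x = f x / g x` (well-defined,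
i.e. `g > 0`, on `{0,…,k₀}`) is increasing on `{0,…,k₀}`, then
`t x = S_X x - l x · S_Y x` is nonincreasing on `{0,…,k₀}`. -/
theorem t_antitone_on_increasing_part
    (f g : ℕ → ℝ) (hf0 : ∀ x, 0 ≤ f x) (hg0 : ∀ x, 0 ≤ g x)
    (hfsum : Summable f) (hgsum : Summable g)
    (hsupp : ∀ x, f x ≠ 0 → g x ≠ 0)
    (k₀ : ℕ) (hgpos : ∀ x : ℕ, x ≤ k₀ → 0 < g x)
    (hmono : ∀ x y : ℕ, x ≤ y → y ≤ k₀ → f x / g x ≤ f y / g y)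
    (SX SY t : ℕ → ℝ)
    (hSX : ∀ x, SX x = ∑' i : ℕ, f (x + i))
    (hSY : ∀ x, SY x = ∑' i : ℕ, g (x + i))
    (ht : ∀ x, t x = SX x - (f x / g x) * SY x) :
    ∀ x y : ℕ, x ≤ y → y ≤ k₀ → t y ≤ t x := by
  have hshift : ∀ (h : ℕ → ℝ), Summable h → ∀ x : ℕ,
      (∑' i : ℕ, h (x + i)) = h x + ∑' i : ℕ, h (x + 1 + i) := by
    intro h hs x
    have hs' : Summable (fun i => h (x + i)) := by
      simpa [add_comm] using (summable_nat_add_iff x).mpr hs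
    rw [Summable.tsum_eq_zero_add hs']
    simp only [Nat.add_zero]
    congr 1
    apply tsum_congr
    intro i
    ring_nf
  have hSXrec : ∀ x, SX x = f x + SX (x + 1) := by
    intro x; rw [hSX, hSX]; exact hshift f hfsum x
  have hSYrec : ∀ x, SY x = g x + SY (x + 1) := by
    intro x; rw [hSY, hSY]; exact hshift g hgsum x
  have hSYnn : ∀ x, 0 ≤ SY x := by
    intro x; rw [hSY]; exact tsum_nonneg fun i => hg0 _
  have step : ∀ x : ℕ, x + 1 ≤ k₀ → t (x + 1) ≤ t x := by
    intro x hx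
    have hgx : 0 < g x := hgpos x (le_trans (Nat.le_succ x) hx)
    have hl : f x / g x ≤ f (x + 1) / g (x + 1) :=
      hmono x (x + 1) (Nat.le_succ x) hx
    have hfx : (f x / g x) * g x = f x := div_mul_cancel₀ _ (ne_of_gt hgx)
    have key : t x - t (x + 1)
        = (f (x + 1) / g (x + 1) - f x / g x) * SY (x + 1) := by
      rw [ht, ht, hSXrec x, hSYrec x]
      linear_combination -hfx
    nlinarith [mul_nonneg (sub_nonneg.mpr hl) (hSYnn (x + 1))]
  intro x y hxy hy
  induction y, hxy using Nat.le_induction with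
  | base => exact le_refl _
  | succ n hn ih =>
    exact le_trans (step n hy) (ih (le_trans (Nat.le_succ n) hy))
end

section
/- Let X, Y be discrete random variables on ℕ with Supp(X) ⊆ Supp(Y) ⊆ ℕ such that l(x) = f_X(x)/f_Y(x) is logconcave and positive on {0,...,u_X}, u_X < u_Y (u_Y possibly infinite), and l(1)/l(0) > 1. Then X ≤_hr Y if and only if l(0) ≥ 1. -/
/-!
Write `l = f / g`. As `S_X(x) = f(x) + S_X(x + 1)` and likewise for `Y`, the ratio `S_X / S_Y`
decreases from `x` to `x + 1` iff `S_X(x + 1) g(x) ≤ f(x) S_Y(x + 1)`; at `x = 0`, where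
`S_X(0) = S_Y(0) = 1`, this says `l 0 ≥ 1`. Conversely, logconcavity makes `l` unimodal on
`{0, …, u_X}`. If `x` is past the mode then `l i ≤ l x` for all `i > x`, and summing
`f i g x ≤ f x g i` gives the step inequality. Otherwise `l ≥ l 0 ≥ 1` on `[0, x]`, so `f ≥ g`
there; since both masses are `1` this gives `S_X(x + 1) ≤ S_Y(x + 1)`, and together with
`g x ≤ f x` the step inequality again.
-/

open Finset

noncomputable def survival (f : ℕ → ℝ) (x : ℕ) : ℝ := ∑' i, f (x + i)

section Survival

variable {f g : ℕ → ℝ}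

lemma Summable.comp_const_add (hf : Summable f) (x : ℕ) : Summable fun i => f (x + i) :=
  hf.comp_injective (add_right_injective x)

lemma survival_nonneg (hf : ∀ i, 0 ≤ f i) (x : ℕ) : 0 ≤ survival f x :=
  tsum_nonneg fun _ => hf _

lemma survival_zero : survival f 0 = ∑' i, f i := by
  simp [survival]

lemma survival_eq_add_survival_succ (hf : Summable f) (x : ℕ) :
    survival f x = f x + survival f (x + 1) := by
  rw [survival, (hf.comp_const_add x).tsum_eq_zero_add, survival]
  simp only [add_zero, ← add_assoc, add_right_comm x]

lemma sum_range_add_survival (hf : Summable f) (x : ℕ) :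
    ∑ j ∈ range x, f j + survival f x = ∑' j, f j := by
  simp only [survival, add_comm x]
  exact hf.sum_add_tsum_nat_add x

lemma survival_succ_mul_le_of_forall_mul_le (hf : Summable f) (hg : Summable g) {x : ℕ}
    (h : ∀ i, x < i → f i * g x ≤ f x * g i) :
    survival f (x + 1) * g x ≤ f x * survival g (x + 1) := by
  simp only [survival, ← tsum_mul_right, ← tsum_mul_left]
  exact Summable.tsum_le_tsum (fun i => h _ (by omega))
    ((hf.comp_const_add _).mul_right _) ((hg.comp_const_add _).mul_left _)

lemma survival_le_survival_of_forall_le (hf : Summable f) (hg : Summable g)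
    (hfg : ∑' i, f i = ∑' i, g i) {x : ℕ} (h : ∀ j < x, g j ≤ f j) :
    survival f x ≤ survival g x := by
  have hsum : ∑ j ∈ range x, g j ≤ ∑ j ∈ range x, f j :=
    sum_le_sum fun j hj => h j (mem_range.1 hj)
  linarith [sum_range_add_survival hf x, sum_range_add_survival hg x]

lemma survival_div_antitone_of_succ_mul_le (hf : Summable f) (hg : Summable g)
    (hg0 : ∀ i, 0 ≤ g i) (hstep : ∀ x, survival f (x + 1) * g x ≤ f x * survival g (x + 1))
    {x y : ℕ} (hxy : x ≤ y) (hy : 0 < survival g y) :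
    survival f y / survival g y ≤ survival f x / survival g x := by
  induction y, hxy using Nat.le_induction with
  | base => exact le_rfl
  | succ y _ ih =>
    have hy' : 0 < survival g y := by linarith [survival_eq_add_survival_succ hg y, hg0 y]
    refine le_trans ?_ (ih hy')
    rw [div_le_div_iff₀ hy hy', survival_eq_add_survival_succ hf y,
      survival_eq_add_survival_succ hg y]
    linarith [hstep y]

end Survival

section Logconcave

variable {l : ℕ → ℝ} {n x : ℕ}

lemma antitoneOn_Icc_of_logconcave (hpos : ∀ k ≤ n, 0 < l k)
    (hlc : ∀ k, k + 2 ≤ n → l (k + 2) * l k ≤ l (k + 1) ^ 2) (hx : l (x + 1) ≤ l x) :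
    AntitoneOn l (Set.Icc x n) := by
  have hsucc : ∀ j, x ≤ j → j + 1 ≤ n → l (j + 1) ≤ l j := by
    intro j hj
    induction j, hj using Nat.le_induction with
    | base => exact fun _ => hx
    | succ j _ ih =>
      intro hj
      refine le_of_mul_le_mul_right ?_ (hpos j (by omega))
      calc l (j + 1 + 1) * l j ≤ l (j + 1) ^ 2 := hlc j hj
        _ ≤ l (j + 1) * l j := by
          rw [sq]; exact mul_le_mul_of_nonneg_left (ih (by omega)) (hpos _ (by omega)).le
  refine antitoneOn_of_succ_le Set.ordConnected_Icc fun j _ hj hj' => ?_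
  simp only [Nat.succ_eq_succ, Nat.succ_eq_add_one, Set.mem_Icc] at hj hj' ⊢
  exact hsucc j hj.1 hj'.2

lemma monotoneOn_Icc_of_logconcave (hpos : ∀ k ≤ n, 0 < l k)
    (hlc : ∀ k, k + 2 ≤ n → l (k + 2) * l k ≤ l (k + 1) ^ 2) (hx : l x ≤ l (x + 1))
    (hxn : x + 1 ≤ n) : MonotoneOn l (Set.Icc 0 (x + 1)) := by
  have hsucc : ∀ j ≤ x, l j ≤ l (j + 1) := by
    intro j hj
    induction hj using Nat.decreasingInduction with
    | self => exact hx
    | of_succ j hj ih =>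
      refine le_of_mul_le_mul_left ?_ (hpos (j + 1) (by omega))
      calc l (j + 1) * l j ≤ l (j + 1 + 1) * l j :=
            mul_le_mul_of_nonneg_right ih (hpos j (by omega)).le
        _ ≤ l (j + 1) ^ 2 := hlc j (by omega)
        _ = l (j + 1) * l (j + 1) := sq _
  refine monotoneOn_of_le_succ Set.ordConnected_Icc fun j _ hj hj' => ?_
  simp only [Nat.succ_eq_succ, Nat.succ_eq_add_one, Set.mem_Icc] at hj hj' ⊢
  exact hsucc j (by omega)

end Logconcave

lemma survival_succ_mul_le_of_logconcave {f g : ℕ → ℝ} {n : ℕ} (hf0 : ∀ i, 0 ≤ f i)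
    (hg0 : ∀ i, 0 ≤ g i) (hf : Summable f) (hg : Summable g) (hfg : ∑' i, f i = ∑' i, g i)
    (hsupp : ∀ k, 0 < f k ↔ k ≤ n) (hgpos : ∀ k ≤ n, 0 < g k)
    (hlc : ∀ k, k + 2 ≤ n → f (k + 2) / g (k + 2) * (f k / g k) ≤ (f (k + 1) / g (k + 1)) ^ 2)
    (hl0 : 1 ≤ f 0 / g 0) (x : ℕ) : survival f (x + 1) * g x ≤ f x * survival g (x + 1) := by
  have hlpos : ∀ k ≤ n, 0 < f k / g k := fun k hk => div_pos ((hsupp k).2 hk) (hgpos k hk)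
  have hdominated : (∀ i, x < i → i ≤ n → f i / g i ≤ f x / g x) →
      survival f (x + 1) * g x ≤ f x * survival g (x + 1) := by
    refine fun h => survival_succ_mul_le_of_forall_mul_le hf hg fun i hi => ?_
    rcases le_or_gt i n with hin | hin
    · exact (div_le_div_iff₀ (hgpos i hin) (hgpos x (by omega))).1 (h i hi hin)
    · have hfi : f i = 0 := ((hf0 i).eq_of_not_lt (by rw [hsupp]; omega)).symm
      rw [hfi, zero_mul]
      exact mul_nonneg (hf0 x) (hg0 i)
  rcases le_or_gt n x with hnx | hxn
  · exact hdominated fun i hi hin => absurd hin (by omega)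
  rcases le_or_gt (f (x + 1) / g (x + 1)) (f x / g x) with hdec | hinc
  · have hanti := antitoneOn_Icc_of_logconcave hlpos hlc hdec
    exact hdominated fun i hi hin => hanti ⟨le_rfl, hxn.le⟩ ⟨hi.le, hin⟩ hi.le
  · have hmono := monotoneOn_Icc_of_logconcave hlpos hlc hinc.le hxn
    have hgf : ∀ j ≤ x, g j ≤ f j := fun j hj =>
      (one_le_div (hgpos j (by omega))).1 <|
        hl0.trans (hmono ⟨le_rfl, by omega⟩ ⟨Nat.zero_le j, by omega⟩ (Nat.zero_le j))
    calc survival f (x + 1) * g x ≤ survival g (x + 1) * f x :=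
          mul_le_mul (survival_le_survival_of_forall_le hf hg hfg fun j hj => hgf j (by omega))
            (hgf x le_rfl) (hg0 x) (survival_nonneg hg0 _)
      _ = f x * survival g (x + 1) := mul_comm _ _

theorem logconcave_lr_hr_iff_general
    (f g : ℕ → ℝ) (hf0 : ∀ x, 0 ≤ f x) (hg0 : ∀ x, 0 ≤ g x)
    (hfsum : Summable f) (hgsum : Summable g)
    (hf1 : ∑' x : ℕ, f x = 1) (hg1 : ∑' x : ℕ, g x = 1)
    (uX : ℕ) (uY : ℕ∞) (huXY : (uX : ℕ∞) < uY)
    (hsuppX : ∀ x : ℕ, 0 < f x ↔ x ≤ uX)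
    (hsuppY : ∀ x : ℕ, 0 < g x ↔ (x : ℕ∞) ≤ uY)
    (hlc : ∀ x : ℕ, 1 ≤ x → x + 1 ≤ uX →
      (f (x + 1) / g (x + 1)) * (f (x - 1) / g (x - 1)) ≤ (f x / g x) ^ 2)
    (SX SY : ℕ → ℝ)
    (hSX : ∀ x, SX x = ∑' i : ℕ, f (x + i))
    (hSY : ∀ x, SY x = ∑' i : ℕ, g (x + i)) :
    (∀ x y : ℕ, x ≤ y → 0 < SY y → SX y / SY y ≤ SX x / SY x) ↔ 1 ≤ f 0 / g 0 := by
  obtain rfl : SX = survival f := funext hSX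
  obtain rfl : SY = survival g := funext hSY
  have hgpos : ∀ k ≤ uX + 1, 0 < g k := fun k hk =>
    (hsuppY k).2 ((Nat.cast_le.2 hk).trans (Order.add_one_le_of_lt huXY))
  have htotal : f 0 + survival f 1 = g 0 + survival g 1 := by
    rw [← survival_eq_add_survival_succ hfsum, ← survival_eq_add_survival_succ hgsum,
      survival_zero, survival_zero, hf1, hg1]
  constructor
  · intro hhr
    have hSY1 : 0 < survival g 1 := by
      linarith [survival_eq_add_survival_succ hgsum 1, hgpos 1 (by omega), survival_nonneg hg0 2]
    have h01 := hhr 0 1 zero_le_one hSY1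
    rw [survival_zero, survival_zero, hf1, hg1, div_one, div_le_one hSY1] at h01
    rw [one_le_div (hgpos 0 (by omega))]
    linarith
  · intro hl0 x y hxy hy
    have hstep := survival_succ_mul_le_of_logconcave hf0 hg0 hfsum hgsum (hf1.trans hg1.symm)
      hsuppX (fun k hk => hgpos k (by omega)) (fun k hk => hlc (k + 1) (by omega) hk) hl0
    exact survival_div_antitone_of_succ_mul_le hfsum hgsum hg0 hstep hxy hy

/-- Proposition 2(ii.a): let `X, Y` have supports `{0,…,u_X} ⊆ Supp(Y) = {0,…,u_Y}`
with `u_X < u_Y` (`u_Y` possibly infinite), suppose the likelihood ratio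
`l x = f x / g x` is logconcave and positive on `{0,…,u_X}` and `l 1 / l 0 > 1`.
Then `X ≤_hr Y` (the survival ratio `S_X/S_Y` is nonincreasing where `S_Y > 0`)
iff `l 0 ≥ 1`. -/
theorem logconcave_lr_hr_iff
    (f g : ℕ → ℝ) (hf0 : ∀ x, 0 ≤ f x) (hg0 : ∀ x, 0 ≤ g x)
    (hfsum : Summable f) (hgsum : Summable g)
    (hf1 : ∑' x : ℕ, f x = 1) (hg1 : ∑' x : ℕ, g x = 1)
    (uX : ℕ) (uY : ℕ∞) (huXY : (uX : ℕ∞) < uY)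
    (hsuppX : ∀ x : ℕ, 0 < f x ↔ x ≤ uX)
    (hsuppY : ∀ x : ℕ, 0 < g x ↔ (x : ℕ∞) ≤ uY)
    (hlc : ∀ x : ℕ, 1 ≤ x → x + 1 ≤ uX →
      (f (x + 1) / g (x + 1)) * (f (x - 1) / g (x - 1)) ≤ (f x / g x) ^ 2)
    (hratio : 1 < (f 1 / g 1) / (f 0 / g 0))
    (SX SY : ℕ → ℝ)
    (hSX : ∀ x, SX x = ∑' i : ℕ, f (x + i))
    (hSY : ∀ x, SY x = ∑' i : ℕ, g (x + i)) :
    (∀ x y : ℕ, x ≤ y → 0 < SY y → SX y / SY y ≤ SX x / SY x) ↔ 1 ≤ f 0 / g 0 :=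
  logconcave_lr_hr_iff_general f g hf0 hg0 hfsum hgsum hf1 hg1 uX uY huXY hsuppX hsuppY hlc SX SY
    hSX hSY
end
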